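/- Let π ∈ (0,1), μ ∈ ℝ, λ ∈ ℝ, let ℓ > 0, and let G be a probability measure on (0,∞) with support contained in [ℓ, ∞) and ∫ log σ dG(σ) < ∞. Define the mixture density f(z) = π φ(z; 0,1) + (1−π) f_SNSM(z; μ, λ, G). Then the negative expected log-density is finite: −∫_{−∞}^{∞} f(z) log f(z) dz < ∞. -/

import Mathlib

/-
Gibbs' inequality against the weight `(1 + z²)⁻¹` gives `-x log x ≤ x log (1 + z²) + (1 + z²)⁻¹`
for `x ≥ 0`, so the entropy integral of a density is finite as soon as its logarithmic moment
`∫ f(z) log (1 + z²) dz` is, and the logarithmic moment of a mixture is at most the sum of those of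
its components. For the Gaussian component it is dominated by the second moment. For a skew-normal
component of scale `σ`, bounding `Φ` by `1`, substituting `z = μ + σ t` and using
`log (1 + (μ + σ t)²) ≤ log 2 + log (1 + μ²) + log (1 + σ²) + t²` bounds it by a constant plus
`2 log (1 + σ²) ≤ 2 log 2 + 4 log⁺ σ`; by Tonelli this is integrable against `G` because
`∫ log σ dG < ∞`.
-/

open MeasureTheory

/-- Standard normal density. -/
noncomputable def stdPhi (z : ℝ) : ℝ := Real.exp (-(z ^ 2) / 2) / Real.sqrt (2 * Real.pi)

/-- Standard normal cumulative distribution function. -/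
noncomputable def stdPhiCDF (z : ℝ) : ℝ := ∫ t in Set.Iic z, stdPhi t

/-- Skew-normal density with location `μ`, shape `lam`, scale `σ`. -/
noncomputable def snPDF (μ lam σ z : ℝ) : ℝ :=
  (2 / σ) * stdPhi ((z - μ) / σ) * stdPhiCDF (lam * ((z - μ) / σ))

/-- Skew-normal scale mixture density with mixing distribution `G`. -/
noncomputable def snsmPDF (μ lam : ℝ) (G : Measure ℝ) (z : ℝ) : ℝ :=
  ∫ σ, snPDF μ lam σ z ∂G

open Real

lemma ofReal_integral_le_lintegral_ofReal {α : Type*} [MeasurableSpace α] {μ : Measure α}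
    (f : α → ℝ) : ENNReal.ofReal (∫ a, f a ∂μ) ≤ ∫⁻ a, ENNReal.ofReal (f a) ∂μ := by
  by_cases hf : Integrable f μ
  · rw [integral_eq_lintegral_pos_part_sub_lintegral_neg_part hf]
    exact (ENNReal.ofReal_le_ofReal (sub_le_self _ ENNReal.toReal_nonneg)).trans
      ENNReal.ofReal_toReal_le
  · simp [integral_undef hf]

lemma neg_mul_log_le_mul_log_add_inv {x w : ℝ} (hx : 0 ≤ x) (hw : 0 < w) :
    -(x * log x) ≤ x * log w + w⁻¹ := by
  rcases hx.eq_or_lt with rfl | hx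
  · simpa using inv_nonneg.2 hw.le
  -- Gibbs' inequality `log y ≤ y - 1` at `y = 1 / (w x)`
  have h := log_le_sub_one_of_pos (show 0 < (w * x)⁻¹ by positivity)
  rw [log_inv, log_mul hw.ne' hx.ne'] at h
  have hx' : x * (w * x)⁻¹ = w⁻¹ := by field_simp
  nlinarith [mul_le_mul_of_nonneg_left h hx.le]

lemma ofReal_convexComb_mul_le {p a b c : ℝ} (hp : p ∈ Set.Icc (0 : ℝ) 1) (ha : 0 ≤ a)
    (hb : 0 ≤ b) (hc : 0 ≤ c) :
    ENNReal.ofReal ((p * a + (1 - p) * b) * c) ≤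
      ENNReal.ofReal (a * c) + ENNReal.ofReal (b * c) := by
  obtain ⟨hp0, hp1⟩ := hp
  refine (ENNReal.ofReal_le_ofReal ?_).trans ENNReal.ofReal_add_le
  nlinarith [mul_nonneg (mul_nonneg ha hc) (sub_nonneg.2 hp1), mul_nonneg (mul_nonneg hb hc) hp0]

lemma log_one_add_sq_nonneg (t : ℝ) : 0 ≤ log (1 + t ^ 2) :=
  log_nonneg (by nlinarith [sq_nonneg t])

lemma log_one_add_sq_le_sq (t : ℝ) : log (1 + t ^ 2) ≤ t ^ 2 := by
  linarith [log_le_sub_one_of_pos (show 0 < 1 + t ^ 2 by positivity)]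

lemma log_one_add_sq_add_le (a b : ℝ) :
    log (1 + (a + b) ^ 2) ≤ log 2 + log (1 + a ^ 2) + log (1 + b ^ 2) := by
  rw [← log_mul (by norm_num) (by positivity), ← log_mul (by positivity) (by positivity)]
  exact log_le_log (by positivity) (by nlinarith [sq_nonneg (a - b), sq_nonneg (a * b)])

lemma log_one_add_mul_sq_le (a b : ℝ) :
    log (1 + (a * b) ^ 2) ≤ log (1 + a ^ 2) + log (1 + b ^ 2) := by
  rw [← log_mul (by positivity) (by positivity)]
  exact log_le_log (by positivity) (by nlinarith [sq_nonneg a, sq_nonneg b])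

lemma log_one_add_sq_affine_le (μ σ t : ℝ) :
    log (1 + (μ + σ * t) ^ 2) ≤ log 2 + log (1 + μ ^ 2) + log (1 + σ ^ 2) + t ^ 2 := by
  linarith [log_one_add_sq_add_le μ (σ * t), log_one_add_mul_sq_le σ t, log_one_add_sq_le_sq t]

lemma ofReal_log_one_add_sq_le (σ : ℝ) :
    ENNReal.ofReal (log (1 + σ ^ 2)) ≤ ENNReal.ofReal (log 2) + 2 * ENNReal.ofReal (log σ) := by
  rcases le_total (σ ^ 2) 1 with h | h
  · exact le_add_right (ENNReal.ofReal_le_ofReal (log_le_log (by positivity) (by linarith)))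
  · have hσ : 0 ≤ log σ := by
      have := log_nonneg h; rw [log_pow] at this; push_cast at this; linarith
    rw [← ENNReal.ofReal_ofNat 2, ← ENNReal.ofReal_mul (by norm_num),
      ← ENNReal.ofReal_add (log_nonneg (by norm_num)) (by positivity)]
    refine ENNReal.ofReal_le_ofReal ?_
    calc log (1 + σ ^ 2) ≤ log (2 * σ ^ 2) := log_le_log (by positivity) (by linarith)
      _ = log 2 + 2 * log σ := by
        rw [log_mul (by norm_num) (by positivity), log_pow]; push_cast; ring

lemma lintegral_ofReal_log_one_add_sq_lt_top {G : Measure ℝ} [IsFiniteMeasure G]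
    (hlog : ∫⁻ σ, ENNReal.ofReal (log σ) ∂G < ⊤) :
    ∫⁻ σ, ENNReal.ofReal (log (1 + σ ^ 2)) ∂G < ⊤ := by
  refine (lintegral_mono ofReal_log_one_add_sq_le).trans_lt ?_
  rw [lintegral_add_left measurable_const, lintegral_const,
    lintegral_const_mul _ measurable_log.ennreal_ofReal]
  exact ENNReal.add_lt_top.2 ⟨ENNReal.mul_lt_top ENNReal.ofReal_lt_top (measure_lt_top G _),
    ENNReal.mul_lt_top (by simp) hlog⟩

lemma lintegral_neg_mul_log_lt_top {f : ℝ → ℝ} (hf : ∀ z, 0 ≤ f z)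
    (hmom : ∫⁻ z, ENNReal.ofReal (f z * log (1 + z ^ 2)) < ⊤) :
    ∫⁻ z, ENNReal.ofReal (-(f z * log (f z))) < ⊤ := by
  have hpointwise (z : ℝ) : ENNReal.ofReal (-(f z * log (f z))) ≤
      ENNReal.ofReal (f z * log (1 + z ^ 2)) + ENNReal.ofReal (1 + z ^ 2)⁻¹ :=
    (ENNReal.ofReal_le_ofReal (neg_mul_log_le_mul_log_add_inv (hf z) (by positivity))).trans
      ENNReal.ofReal_add_le
  refine (lintegral_mono hpointwise).trans_lt ?_
  rw [lintegral_add_right _ (by fun_prop)]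
  exact ENNReal.add_lt_top.2 ⟨hmom, integrable_inv_one_add_sq.lintegral_lt_top⟩

lemma stdPhi_eq_gaussianPDFReal : stdPhi = ProbabilityTheory.gaussianPDFReal 0 1 := by
  ext z
  simp [stdPhi, ProbabilityTheory.gaussianPDFReal, div_eq_inv_mul]

lemma stdPhi_nonneg (z : ℝ) : 0 ≤ stdPhi z := by
  unfold stdPhi; positivity

@[fun_prop]
lemma measurable_stdPhi : Measurable stdPhi := by
  unfold stdPhi; fun_prop

lemma integrable_stdPhi : Integrable stdPhi := by
  rw [stdPhi_eq_gaussianPDFReal]; exact ProbabilityTheory.integrable_gaussianPDFReal 0 1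

lemma integral_stdPhi : ∫ z, stdPhi z = 1 := by
  rw [stdPhi_eq_gaussianPDFReal]
  exact ProbabilityTheory.integral_gaussianPDFReal_eq_one 0 one_ne_zero

lemma integrable_stdPhi_mul_sq : Integrable fun t : ℝ => stdPhi t * t ^ 2 := by
  have h := (integrable_rpow_mul_exp_neg_mul_sq (b := 1 / 2) (s := 2) (by norm_num)
    (by norm_num)).div_const (√(2 * π))
  refine h.congr (.of_forall fun t => ?_)
  simp only [stdPhi, rpow_ofNat]
  ring_nf

lemma stdPhiCDF_nonneg (z : ℝ) : 0 ≤ stdPhiCDF z :=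
  setIntegral_nonneg measurableSet_Iic fun t _ => stdPhi_nonneg t

lemma stdPhiCDF_le_one (z : ℝ) : stdPhiCDF z ≤ 1 :=
  integral_stdPhi ▸ setIntegral_le_integral integrable_stdPhi (.of_forall stdPhi_nonneg)

lemma monotone_stdPhiCDF : Monotone stdPhiCDF := fun _ _ hab =>
  setIntegral_mono_set integrable_stdPhi.integrableOn (.of_forall stdPhi_nonneg)
    (.of_forall fun _ ht => le_trans ht hab)

lemma integrable_comp_affine {h : ℝ → ℝ} (hh : Integrable h) (μ : ℝ) {σ : ℝ} (hσ : σ ≠ 0) :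
    Integrable fun z => h ((z - μ) / σ) / σ :=
  ((hh.comp_div hσ).comp_sub_right μ).div_const σ

lemma integral_comp_affine (h : ℝ → ℝ) (μ : ℝ) {σ : ℝ} (hσ : 0 < σ) :
    ∫ z, h ((z - μ) / σ) / σ = ∫ t, h t := by
  rw [integral_div, integral_sub_right_eq_self (fun y => h (y / σ)), Measure.integral_comp_div,
    abs_of_pos hσ, smul_eq_mul, mul_div_cancel_left₀ _ hσ.ne']

section SkewNormal

variable (μ lam : ℝ)

lemma snPDF_nonneg {σ : ℝ} (hσ : 0 ≤ σ) (z : ℝ) : 0 ≤ snPDF μ lam σ z := by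
  have := stdPhi_nonneg ((z - μ) / σ)
  have := stdPhiCDF_nonneg (lam * ((z - μ) / σ))
  unfold snPDF; positivity

lemma snPDF_le {σ : ℝ} (hσ : 0 ≤ σ) (z : ℝ) : snPDF μ lam σ z ≤ 2 / σ * stdPhi ((z - μ) / σ) := by
  have := stdPhi_nonneg ((z - μ) / σ)
  exact mul_le_of_le_one_right (by positivity) (stdPhiCDF_le_one _)

lemma measurable_snPDF_uncurry : Measurable fun q : ℝ × ℝ => snPDF μ lam q.1 q.2 := by
  have ht : Measurable fun q : ℝ × ℝ => (q.2 - μ) / q.1 := by fun_prop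
  exact ((measurable_const.div measurable_fst).mul (measurable_stdPhi.comp ht)).mul
    (monotone_stdPhiCDF.measurable.comp (measurable_const.mul ht))

lemma snPDF_mul_log_le {σ : ℝ} (hσ : 0 < σ) (z : ℝ) :
    snPDF μ lam σ z * log (1 + z ^ 2) ≤ 2 / σ * stdPhi ((z - μ) / σ) *
      (log 2 + log (1 + μ ^ 2) + log (1 + σ ^ 2) + ((z - μ) / σ) ^ 2) := by
  have hz : z = μ + σ * ((z - μ) / σ) := by field_simp; ring
  have hlog := log_one_add_sq_affine_le μ σ ((z - μ) / σ)
  rw [← hz] at hlog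
  have := stdPhi_nonneg ((z - μ) / σ)
  exact mul_le_mul (snPDF_le μ lam hσ.le z) hlog (log_one_add_sq_nonneg z) (by positivity)

lemma lintegral_snPDF_mul_log_le {σ : ℝ} (hσ : 0 < σ) :
    ∫⁻ z, ENNReal.ofReal (snPDF μ lam σ z * log (1 + z ^ 2)) ≤
      ENNReal.ofReal (2 * (log 2 + log (1 + μ ^ 2) + ∫ t, stdPhi t * t ^ 2)) +
        2 * ENNReal.ofReal (log (1 + σ ^ 2)) := by
  set M := log 2 + log (1 + μ ^ 2) + log (1 + σ ^ 2)
  set ψ : ℝ → ℝ := fun t => 2 * (M * stdPhi t + stdPhi t * t ^ 2)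
  have hψ : Integrable ψ :=
    ((integrable_stdPhi.const_mul M).add integrable_stdPhi_mul_sq).const_mul 2
  have hψ_nonneg (t : ℝ) : 0 ≤ ψ t := by
    have := stdPhi_nonneg t
    have : 0 ≤ M := by
      have := log_one_add_sq_nonneg μ; have := log_one_add_sq_nonneg σ
      have := log_nonneg (one_le_two (α := ℝ)); positivity
    positivity
  have hpointwise (z : ℝ) : snPDF μ lam σ z * log (1 + z ^ 2) ≤ ψ ((z - μ) / σ) / σ :=
    (snPDF_mul_log_le μ lam hσ z).trans_eq (by simp only [ψ]; ring)
  have hA : 0 ≤ log 2 + log (1 + μ ^ 2) + ∫ t, stdPhi t * t ^ 2 := by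
    have := log_one_add_sq_nonneg μ; have := log_nonneg (one_le_two (α := ℝ))
    have : 0 ≤ ∫ t, stdPhi t * t ^ 2 := integral_nonneg fun t => by positivity [stdPhi_nonneg t]
    positivity
  calc ∫⁻ z, ENNReal.ofReal (snPDF μ lam σ z * log (1 + z ^ 2))
      ≤ ∫⁻ z, ENNReal.ofReal (ψ ((z - μ) / σ) / σ) :=
        lintegral_mono fun z => ENNReal.ofReal_le_ofReal (hpointwise z)
    _ = ENNReal.ofReal (∫ z, ψ ((z - μ) / σ) / σ) :=
        (ofReal_integral_eq_lintegral_ofReal (integrable_comp_affine hψ μ hσ.ne')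
          (.of_forall fun z => div_nonneg (hψ_nonneg _) hσ.le)).symm
    _ = ENNReal.ofReal (2 * (log 2 + log (1 + μ ^ 2) + ∫ t, stdPhi t * t ^ 2) +
          2 * log (1 + σ ^ 2)) := by
        rw [integral_comp_affine ψ μ hσ, integral_const_mul,
          integral_add (integrable_stdPhi.const_mul M) integrable_stdPhi_mul_sq, integral_const_mul,
          integral_stdPhi]
        simp only [M]; ring_nf
    _ = _ := by
        rw [ENNReal.ofReal_add (by positivity) (by positivity [log_one_add_sq_nonneg σ]),
          ENNReal.ofReal_mul zero_le_two,
          ENNReal.ofReal_mul zero_le_two, ENNReal.ofReal_ofNat]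

end SkewNormal

lemma snsmPDF_nonneg (μ lam : ℝ) {G : Measure ℝ} (hG : ∀ᵐ σ ∂G, 0 < σ) (z : ℝ) :
    0 ≤ snsmPDF μ lam G z :=
  integral_nonneg_of_ae (hG.mono fun _ hσ => snPDF_nonneg μ lam hσ.le z)

lemma lintegral_snsmPDF_mul_log_lt_top (μ lam : ℝ) {G : Measure ℝ} [IsFiniteMeasure G]
    (hG : ∀ᵐ σ ∂G, 0 < σ) (hlog : ∫⁻ σ, ENNReal.ofReal (log σ) ∂G < ⊤) :
    ∫⁻ z, ENNReal.ofReal (snsmPDF μ lam G z * log (1 + z ^ 2)) < ⊤ := by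
  set C := ENNReal.ofReal (2 * (log 2 + log (1 + μ ^ 2) + ∫ t, stdPhi t * t ^ 2))
  have hmeas : Measurable fun q : ℝ × ℝ =>
      ENNReal.ofReal (snPDF μ lam q.2 q.1 * log (1 + q.1 ^ 2)) :=
    (((measurable_snPDF_uncurry μ lam).comp measurable_swap).mul (by fun_prop)).ennreal_ofReal
  calc ∫⁻ z, ENNReal.ofReal (snsmPDF μ lam G z * log (1 + z ^ 2))
      ≤ ∫⁻ z, ∫⁻ σ, ENNReal.ofReal (snPDF μ lam σ z * log (1 + z ^ 2)) ∂G :=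
        lintegral_mono fun z => by
          rw [snsmPDF, ← integral_mul_const]; exact ofReal_integral_le_lintegral_ofReal _
    _ = ∫⁻ σ, (∫⁻ z, ENNReal.ofReal (snPDF μ lam σ z * log (1 + z ^ 2))) ∂G :=
        lintegral_lintegral_swap hmeas.aemeasurable
    _ ≤ ∫⁻ σ, C + 2 * ENNReal.ofReal (log (1 + σ ^ 2)) ∂G :=
        lintegral_mono_ae (hG.mono fun σ hσ => lintegral_snPDF_mul_log_le μ lam hσ)
    _ = C * G Set.univ + 2 * ∫⁻ σ, ENNReal.ofReal (log (1 + σ ^ 2)) ∂G := by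
        rw [lintegral_add_left measurable_const, lintegral_const,
          lintegral_const_mul _ (by fun_prop)]
    _ < ⊤ := ENNReal.add_lt_top.2 ⟨ENNReal.mul_lt_top ENNReal.ofReal_lt_top (measure_lt_top G _),
        ENNReal.mul_lt_top (by simp) (lintegral_ofReal_log_one_add_sq_lt_top hlog)⟩

lemma lintegral_stdPhi_mul_log_lt_top :
    ∫⁻ z, ENNReal.ofReal (stdPhi z * log (1 + z ^ 2)) < ⊤ :=
  (lintegral_mono fun z => ENNReal.ofReal_le_ofReal <|
    mul_le_mul_of_nonneg_left (log_one_add_sq_le_sq z) (stdPhi_nonneg z)).trans_lt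
    integrable_stdPhi_mul_sq.lintegral_lt_top

theorem stmt11 (p μ lam ℓ : ℝ) (hp : p ∈ Set.Ioo (0 : ℝ) 1) (hℓ : 0 < ℓ)
    (G : Measure ℝ) (hG : IsProbabilityMeasure G) (hsupp : G (Set.Iio ℓ) = 0)
    (hlog : ∫⁻ σ, ENNReal.ofReal (Real.log σ) ∂G < ⊤)
    (f : ℝ → ℝ) (hf : f = fun z => p * stdPhi z + (1 - p) * snsmPDF μ lam G z) :
    ∫⁻ z, ENNReal.ofReal (-(f z * Real.log (f z))) ∂(volume : Measure ℝ) < ⊤ := by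
  have hpos : ∀ᵐ σ ∂G, 0 < σ :=
    measure_eq_zero_iff_ae_notMem.1 hsupp |>.mono fun σ hσ => hℓ.trans_le (not_lt.1 hσ)
  have hp' : p ∈ Set.Icc (0 : ℝ) 1 := Set.Ioo_subset_Icc_self hp
  have hmix (z : ℝ) := snsmPDF_nonneg μ lam hpos z
  subst hf
  refine lintegral_neg_mul_log_lt_top (fun z => ?_) ?_
  · exact add_nonneg (mul_nonneg hp'.1 (stdPhi_nonneg z)) (mul_nonneg (sub_nonneg.2 hp'.2) (hmix z))
  calc ∫⁻ z, ENNReal.ofReal ((p * stdPhi z + (1 - p) * snsmPDF μ lam G z) * log (1 + z ^ 2))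
      ≤ ∫⁻ z, ENNReal.ofReal (stdPhi z * log (1 + z ^ 2)) +
          ENNReal.ofReal (snsmPDF μ lam G z * log (1 + z ^ 2)) :=
        lintegral_mono fun z => ofReal_convexComb_mul_le hp' (stdPhi_nonneg z) (hmix z)
          (log_one_add_sq_nonneg z)
    _ < ⊤ := by
        rw [lintegral_add_left (by fun_prop)]
        exact ENNReal.add_lt_top.2 ⟨lintegral_stdPhi_mul_log_lt_top,
          lintegral_snsmPDF_mul_log_lt_top μ lam hpos hlog⟩
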